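/- arXiv:2008.08935 — 2 statements merged into one kernel-verified Lean document; each statement's English description precedes it below -/
import Mathlib

section
/- For every f in the maximal domain D([Φ,N]) = D(ΦN) ∩ D(NΦ) of the commutator, one has ΦNf − NΦf = i·f. -/
noncomputable section

open MeasureTheory Complex Real AddCircle ContinuousLinearMap
open scoped ENNReal NNReal

namespace GW

/-- The Hilbert space `H = ℓ²(ℕ, ℂ)`. -/
abbrev H : Type := lp (fun _ : ℕ => ℂ) 2

instance fact2pi : Fact (0 < 2 * Real.pi) := ⟨by positivity⟩

/-- The circle `𝕋`, realized as `ℝ / 2πℤ`; the point `θ` corresponds to `e^{iθ}`. -/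
abbrev Circle2 : Type := AddCircle (2 * Real.pi)

/-- Normalized Lebesgue (Haar) measure `dθ/2π` on the circle. -/
abbrev μT : Measure Circle2 := @AddCircle.haarAddCircle (2 * Real.pi) fact2pi

/-- `L²(𝕋)` with respect to normalized Lebesgue measure. -/
abbrev L2T : Type := MeasureTheory.Lp ℂ 2 μT

/-- Extension of an `ℕ`-indexed coefficient sequence to `ℤ` by zero. -/
def extz (f : ℕ → ℂ) : ℤ → ℂ := fun n => if 0 ≤ n then f n.toNat else 0

lemma extz_natCast (f : ℕ → ℂ) (n : ℕ) : extz f (n : ℤ) = f n := by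
  simp [extz]

lemma extz_memℓp (f : H) : Memℓp (extz ⇑f) 2 := by
  apply memℓp_gen
  have hs : Summable fun n : ℕ => ‖(⇑f) n‖ ^ (2 : ℝ≥0∞).toReal :=
    (lp.memℓp f).summable (by norm_num)
  have h0 : ∀ z : ℤ, z ∉ Set.range ((↑·) : ℕ → ℤ) →
      ‖extz ⇑f z‖ ^ (2 : ℝ≥0∞).toReal = 0 := by
    intro z hz
    have hneg : ¬ (0 : ℤ) ≤ z := fun h => hz ⟨z.toNat, by simpa using Int.toNat_of_nonneg h⟩
    simp only [extz, if_neg hneg, norm_zero]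
    rw [Real.zero_rpow (by norm_num)]
  have hinj : Function.Injective ((↑·) : ℕ → ℤ) := fun a b h => by simpa using h
  refine (hinj.summable_iff h0).mp ?_
  refine hs.congr fun n => ?_
  simp [Function.comp, extz_natCast]

/-- The zero-extension `ℓ²(ℕ,ℂ) → ℓ²(ℤ,ℂ)`. -/
def extlp (f : H) : lp (fun _ : ℤ => ℂ) 2 := ⟨extz ⇑f, extz_memℓp f⟩

/-- `J` as a plain function: send `(c_n)_{n∈ℕ}` to `Σ_{n∈ℕ} c_n e^{inθ}` in `L²(𝕋)`,
via the Fourier Hilbert basis of `L²(𝕋)`. -/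
def Jmap (f : H) : L2T := (@fourierBasis (2 * Real.pi) fact2pi).repr.symm (extlp f)

lemma extlp_add (f g : H) : extlp (f + g) = extlp f + extlp g := by
  apply Subtype.ext
  funext n
  show extz (⇑(f + g)) n = extz ⇑f n + extz ⇑g n
  rcases le_or_gt 0 n with h | h
  · simp only [extz, if_pos h]
    exact congrFun (lp.coeFn_add f g) n.toNat
  · simp [extz, if_neg (not_le.mpr h)]

lemma extlp_smul (c : ℂ) (f : H) : extlp (c • f) = c • extlp f := by
  apply Subtype.ext
  funext n
  show extz (⇑(c • f)) n = c • extz ⇑f n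
  rcases le_or_gt 0 n with h | h
  · simp only [extz, if_pos h]
    rw [lp.coeFn_smul]
    rfl
  · simp [extz, if_neg (not_le.mpr h)]

/-- `J` as a linear map. -/
def Jlin : H →ₗ[ℂ] L2T where
  toFun := Jmap
  map_add' f g := show Jmap (f + g) = Jmap f + Jmap g by
    unfold Jmap; rw [extlp_add, map_add]
  map_smul' c f := show Jmap (c • f) = c • Jmap f by
    unfold Jmap; rw [extlp_smul, _root_.map_smul]

lemma norm_extlp (f : H) : ‖extlp f‖ = ‖f‖ := by
  rw [lp.norm_eq_tsum_rpow (by norm_num : 0 < (2 : ℝ≥0∞).toReal) (extlp f),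
    lp.norm_eq_tsum_rpow (by norm_num : 0 < (2 : ℝ≥0∞).toReal) f]
  congr 1
  have hinj : Function.Injective ((↑·) : ℕ → ℤ) := fun a b h => by simpa using h
  have h0 : ∀ z, z ∉ Set.range ((↑·) : ℕ → ℤ) →
      ‖extlp f z‖ ^ (2 : ℝ≥0∞).toReal = 0 := by
    intro z hz
    have hneg : ¬ (0 : ℤ) ≤ z := fun h => hz ⟨z.toNat, by simpa using Int.toNat_of_nonneg h⟩
    show ‖extz ⇑f z‖ ^ (2 : ℝ≥0∞).toReal = 0
    simp only [extz, if_neg hneg, norm_zero]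
    rw [Real.zero_rpow (by norm_num)]
  have hsupp : (Function.support fun z => ‖extlp f z‖ ^ (2 : ℝ≥0∞).toReal) ⊆
      Set.range ((↑·) : ℕ → ℤ) := by
    intro z hz
    by_contra h
    exact hz (h0 z h)
  have key := hinj.tsum_eq (f := fun z => ‖extlp f z‖ ^ (2 : ℝ≥0∞).toReal) hsupp
  rw [← key]
  exact tsum_congr fun n => by
    show ‖extz ⇑f (n : ℤ)‖ ^ (2 : ℝ≥0∞).toReal = _
    rw [extz_natCast]

/-- The isometric embedding `J : H → L²(𝕋)` as a continuous linear map; it maps the `n`-th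
standard basis vector of `ℓ²(ℕ,ℂ)` to `θ ↦ e^{inθ}`, `n ∈ ℕ`. -/
def JH : H →L[ℂ] L2T :=
  LinearMap.mkContinuousOfExistsBound Jlin
    ⟨1, fun f => by
      simp only [Jlin, LinearMap.coe_mk, AddHom.coe_mk, one_mul, Jmap]
      rw [LinearIsometryEquiv.norm_map]
      exact le_of_eq (norm_extlp f)⟩

end GW

namespace GW

/-- The argument function on the circle: `e^{iθ} ↦ θ` with `θ ∈ (−π, π]`, as a `ℂ`-valued
function. -/
def argFun : Circle2 → ℂ :=
  fun x => (((AddCircle.measurableEquivIoc (2 * Real.pi) (-Real.pi) x : Set.Ioc (-Real.pi) (-Real.pi + 2 * Real.pi)) : ℝ) : ℂ)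

lemma argFun_memℒp : MemLp argFun ⊤ μT := by
  apply memLp_top_of_bound (C := Real.pi)
  · exact (Complex.measurable_ofReal.comp (measurable_subtype_coe.comp
      (AddCircle.measurableEquivIoc (2 * Real.pi) (-Real.pi)).measurable)).aestronglyMeasurable
  · refine Filter.Eventually.of_forall fun x => ?_
    have h := (AddCircle.measurableEquivIoc (2 * Real.pi) (-Real.pi) x).2
    have h1 : -Real.pi < ((AddCircle.measurableEquivIoc (2 * Real.pi) (-Real.pi) x : Set.Ioc (-Real.pi) (-Real.pi + 2 * Real.pi)) : ℝ) := h.1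
    have h2 := h.2
    rw [argFun, Complex.norm_real, Real.norm_eq_abs, abs_le]
    constructor
    · linarith
    · linarith

lemma mul_memℒp (φ : Circle2 → ℂ) (hφ : MemLp φ ⊤ μT) (f : L2T) : MemLp (φ • ⇑f) 2 μT :=
  (Lp.memLp f).smul hφ

lemma mul_toLp_add (φ : Circle2 → ℂ) (hφ : MemLp φ ⊤ μT) (f g : L2T) :
    (mul_memℒp φ hφ (f + g)).toLp (φ • ⇑(f + g)) =
      (mul_memℒp φ hφ f).toLp (φ • ⇑f) + (mul_memℒp φ hφ g).toLp (φ • ⇑g) := by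
  rw [MemLp.toLp_congr (mul_memℒp φ hφ (f + g)) ((mul_memℒp φ hφ f).add (mul_memℒp φ hφ g))
    ((Lp.coeFn_add f g).mono fun x hx => by
      simp only [Pi.smul_apply', hx, Pi.add_apply, smul_add])]
  exact MemLp.toLp_add _ _

lemma mul_toLp_smul (φ : Circle2 → ℂ) (hφ : MemLp φ ⊤ μT) (c : ℂ) (f : L2T) :
    (mul_memℒp φ hφ (c • f)).toLp (φ • ⇑(c • f)) = c • (mul_memℒp φ hφ f).toLp (φ • ⇑f) := by
  rw [MemLp.toLp_congr (mul_memℒp φ hφ (c • f)) ((mul_memℒp φ hφ f).const_smul c)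
    ((Lp.coeFn_smul c f).mono fun x hx => by
      rw [Pi.smul_apply', hx, Pi.smul_apply, Pi.smul_apply, Pi.smul_apply', smul_comm])]
  exact MemLp.toLp_const_smul c _

/-- Multiplication by a bounded measurable function, as a linear map on `L²(𝕋)`. -/
def mulLin (φ : Circle2 → ℂ) (hφ : MemLp φ ⊤ μT) : L2T →ₗ[ℂ] L2T where
  toFun f := (mul_memℒp φ hφ f).toLp (φ • ⇑f)
  map_add' f g := mul_toLp_add φ hφ f g
  map_smul' c f := mul_toLp_smul φ hφ c f

/-- Multiplication by a bounded measurable function, as a bounded operator on `L²(𝕋)`. -/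
def mulCLM (φ : Circle2 → ℂ) (hφ : MemLp φ ⊤ μT) : L2T →L[ℂ] L2T :=
  LinearMap.mkContinuousOfExistsBound (mulLin φ hφ)
    ⟨(eLpNorm φ ⊤ μT).toReal, fun f => by
      simp only [mulLin, LinearMap.coe_mk, AddHom.coe_mk]
      rw [Lp.norm_toLp, Lp.norm_def]
      rw [← ENNReal.toReal_mul]
      apply ENNReal.toReal_mono
      · exact ENNReal.mul_ne_top hφ.eLpNorm_ne_top (Lp.memLp f).eLpNorm_ne_top
      · exact eLpNorm_smul_le_mul_eLpNorm (Lp.memLp f).1 hφ.1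
          ⟩

/-- The Garrison–Wong phase operator `Φ = J* ∘ M_arg ∘ J` on `H`. -/
def Phi : H →L[ℂ] H :=
  (ContinuousLinearMap.adjoint JH) ∘L (mulCLM argFun argFun_memℒp) ∘L JH

/-- The domain of the number operator: `{f ∈ H : Σ n² |c_n|² < ∞}`. -/
def domN : Set H := {f : H | Summable fun n : ℕ => (n : ℝ) ^ 2 * ‖f n‖ ^ 2}

lemma Nop_memℓp {f : H} (hf : f ∈ domN) : Memℓp (fun n : ℕ => (n : ℂ) * f n) 2 := by
  apply memℓp_gen
  refine Summable.congr hf fun n => ?_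
  have h2 : ((2 : ℝ≥0∞)).toReal = ((2 : ℕ) : ℝ) := by norm_num
  rw [h2, Real.rpow_natCast]
  simp [norm_mul, mul_pow]

/-- The number operator `N`, defined on its maximal domain `domN`: `(Nf)_n = n·c_n`. -/
def Nop (f : H) (hf : f ∈ domN) : H := ⟨fun n : ℕ => (n : ℂ) * f n, Nop_memℓp hf⟩

/-- The standard orthonormal basis `(e_n)` of `H`. -/
def eH (n : ℕ) : H := lp.single 2 n (1 : ℂ)

lemma norm_exp_mul (x : ℝ) (c : ℂ) : ‖Complex.exp ((x : ℂ) * Complex.I) * c‖ = ‖c‖ := by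
  rw [norm_mul, Complex.norm_exp_ofReal_mul_I, one_mul]

lemma U_memℓp (t : ℝ) (f : H) : Memℓp (fun n : ℕ => Complex.exp (((n * t : ℝ) : ℂ) * Complex.I) * f n) 2 := by
  apply memℓp_gen
  refine Summable.congr ((lp.memℓp f).summable (by norm_num)) fun n => ?_
  rw [norm_exp_mul]

/-- The unitary group `U_t = e^{itN}`: `(U_t f)_n = e^{int} f_n`, as a linear map. -/
def Ulin (t : ℝ) : H →ₗ[ℂ] H where
  toFun f := ⟨fun n : ℕ => Complex.exp (((n * t : ℝ) : ℂ) * Complex.I) * f n, U_memℓp t f⟩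
  map_add' f g := by
    apply Subtype.ext
    funext n
    show Complex.exp _ * (⇑(f + g)) n = _
    rw [lp.coeFn_add]
    show Complex.exp _ * (f n + g n) =
      Complex.exp _ * f n + Complex.exp _ * g n
    ring
  map_smul' c f := by
    apply Subtype.ext
    funext n
    show Complex.exp _ * (⇑(c • f)) n = _
    rw [lp.coeFn_smul]
    show Complex.exp _ * (c * f n) = c * (Complex.exp _ * f n)
    ring

/-- The unitary group `U_t = e^{itN}`: `(U_t f)_n = e^{int} f_n`. -/
def U (t : ℝ) : H →L[ℂ] H :=
  LinearMap.mkContinuousOfExistsBound (Ulin t)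
    ⟨1, fun f => by
      simp only [Ulin, LinearMap.coe_mk, AddHom.coe_mk, one_mul]
      apply le_of_eq
      rw [lp.norm_eq_tsum_rpow (by norm_num : 0 < (2 : ℝ≥0∞).toReal),
        lp.norm_eq_tsum_rpow (by norm_num : 0 < (2 : ℝ≥0∞).toReal) f]
      congr 1
      refine tsum_congr fun n => ?_
      show ‖Complex.exp (((n * t : ℝ) : ℂ) * Complex.I) * f n‖ ^ (2 : ℝ≥0∞).toReal = _
      rw [norm_exp_mul]⟩

/-- The indicator function of a subset of the circle, as a `ℂ`-valued function. -/
def indFun (B : Set Circle2) : Circle2 → ℂ := Set.indicator B (fun _ => (1 : ℂ))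

lemma indFun_memℒp {B : Set Circle2} (hB : MeasurableSet B) : MemLp (indFun B) ⊤ μT := by
  apply memLp_top_of_bound (C := 1)
  · exact (aestronglyMeasurable_const.indicator hB)
  · refine Filter.Eventually.of_forall fun x => ?_
    by_cases h : x ∈ B <;> simp [indFun, h]

open scoped Classical in
/-- The POVM `Q(B) = J* ∘ M_{1_B} ∘ J` obtained by compressing multiplication by the
indicator of `B` to `H` (defined to be `0` for non-measurable `B`). -/
def Qop (B : Set Circle2) : H →L[ℂ] H :=
  if h : MeasurableSet B then
    (ContinuousLinearMap.adjoint JH) ∘L (mulCLM (indFun B) (indFun_memℒp h)) ∘L JH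
  else 0

end GW

/-!
In the basis `(e_n)` the phase operator has the Toeplitz matrix `(Φ e_m)_n = ĉ(n - m)`, where
`ĉ(k)` are the Fourier coefficients of the sawtooth `θ ↦ θ`; integrating by parts, its jump at
`θ = π` gives `k ĉ(k) = i (-1)^k` for `k ≠ 0`. Hence, for `f ∈ D(N)` and every `n`,
`(ΦNf)_n - n (Φf)_n - i f_n = -i (-1)^n S` with `S = Σ_m (-1)^m f_m`, a series that converges
because the other series in this identity do. If moreover `Φf ∈ D(N)`, the left-hand sides are the
coordinates of a vector of `ℓ²`, yet all have modulus `|S|`; so `S = 0`.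
-/

open scoped InnerProductSpace

lemma fourierCoeffOn_one {a b : ℝ} (hab : a < b) {n : ℤ} (hn : n ≠ 0) :
    fourierCoeffOn hab (fun _ => (1 : ℂ)) n = 0 := by
  have := Fact.mk (by linarith : 0 < b - a)
  have h : AddCircle.liftIoc (b - a) a (fun _ : ℝ => (1 : ℂ)) = fourier 0 := by
    ext x
    simp [AddCircle.liftIoc]
  rw [fourierCoeffOn, h, fourierCoeff_fourier, Pi.single_eq_of_ne hn]

lemma fourierCoeff_fourier_smul {T : ℝ} [Fact (0 < T)] {E : Type*} [NormedAddCommGroup E]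
    [NormedSpace ℂ E] (f : AddCircle T → E) (m n : ℤ) :
    fourierCoeff (fun x => fourier m x • f x) n = fourierCoeff f (n - m) := by
  unfold fourierCoeff
  congr 1 with x
  rw [smul_smul, ← fourier_add]
  ring_nf

lemma neg_one_zpow_natCast_sub {R : Type*} [DivisionRing R] (n m : ℕ) :
    (-1 : R) ^ ((n : ℤ) - m) = (-1) ^ n * (-1) ^ m := by
  rw [zpow_sub₀ (neg_ne_zero.mpr one_ne_zero), zpow_natCast, zpow_natCast, div_eq_mul_inv,
    ← inv_pow, inv_neg, inv_one]

lemma lp.const_eq_zero_of_forall_norm_apply_eq {ι : Type*} [Infinite ι] {E : ι → Type*}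
    [∀ i, NormedAddCommGroup (E i)] {p : ℝ≥0∞} (hp : 0 < p.toReal) {v : lp E p} {c : ℝ}
    (h : ∀ i, ‖v i‖ = c) : c = 0 := by
  have hsum := (lp.memℓp v).summable hp
  simp only [h, summable_const_iff] at hsum
  exact (Real.rpow_eq_zero (h (Classical.arbitrary ι) ▸ norm_nonneg _) hp.ne').mp hsum

namespace GW

lemma Nop_apply {f : H} (hf : f ∈ domN) (n : ℕ) : Nop f hf n = n * f n := rfl

lemma argFun_eq_liftIoc : argFun = AddCircle.liftIoc (2 * π) (-π) ((↑) : ℝ → ℂ) := rfl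

lemma fourierCoeff_argFun {k : ℤ} (hk : k ≠ 0) :
    fourierCoeff argFun k = I * (-1) ^ k / k := by
  have hab : -π < -π + 2 * π := by linarith [pi_pos]
  have hderiv (x : ℝ) : HasDerivAt ((↑) : ℝ → ℂ) 1 x := (hasDerivAt_id x).ofReal_comp
  rw [argFun_eq_liftIoc, fourierCoeff_liftIoc_eq,
    fourierCoeffOn_of_hasDerivAt hab hk (fun x _ => hderiv x) intervalIntegrable_const,
    fourierCoeffOn_one hab hk, fourier_coe_apply]
  have hexp : (2 * π * I * ↑(-k) * ↑(-π) / ↑(-π + 2 * π - -π) : ℂ) = k * (π * I) := by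
    push_cast
    field_simp
    ring
  rw [hexp, exp_int_mul, exp_pi_mul_I]
  push_cast
  field_simp
  linear_combination -2 * (-1) ^ k * I_sq

lemma extlp_eH (m : ℕ) : extlp (eH m) = lp.single 2 (m : ℤ) 1 := by
  ext j
  rcases le_or_gt 0 j with hj | hj
  · lift j to ℕ using hj
    simp [extlp, extz, eH, lp.single_apply, Pi.single_apply]
  · simp [extlp, extz, eH, lp.single_apply, Pi.single_apply, not_le.mpr hj]
    omega

lemma JH_eH (m : ℕ) : JH (eH m) = fourierBasis (m : ℤ) := by
  simp only [JH, LinearMap.mkContinuousOfExistsBound_apply]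
  change fourierBasis.repr.symm (extlp (eH m)) = _
  rw [extlp_eH, HilbertBasis.repr_symm_single]

lemma coeFn_mulCLM (φ : Circle2 → ℂ) (hφ : MemLp φ ⊤ μT) (F : L2T) :
    ⇑(mulCLM φ hφ F) =ᵐ[μT] φ * ⇑F :=
  (mul_memℒp φ hφ F).coeFn_toLp

lemma inner_eH_left (n : ℕ) (v : H) : ⟪eH n, v⟫_ℂ = v n := by
  simp [eH, lp.inner_single_left]

lemma inner_eH_Phi_eH (n m : ℕ) : ⟪eH n, Phi (eH m)⟫_ℂ = fourierCoeff argFun (n - m) := by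
  rw [Phi, comp_apply, comp_apply, adjoint_inner_right, JH_eH, JH_eH,
    ← HilbertBasis.repr_apply_apply, fourierBasis_repr, ← fourierCoeff_fourier_smul]
  refine congrFun (fourierCoeff_congr_ae ?_) _
  filter_upwards [coeFn_mulCLM argFun argFun_memℒp (fourierBasis (m : ℤ)),
    coe_fourierBasis (T := 2 * π) ▸ coeFn_fourierLp 2 (m : ℤ)] with x hmul hfourier
  rw [hmul, Pi.mul_apply, hfourier, smul_eq_mul, mul_comm]

lemma hasSum_Phi_apply (g : H) (n : ℕ) :
    HasSum (fun m : ℕ => fourierCoeff argFun (n - m) * g m) (Phi g n) := by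
  have h := ((innerSL ℂ (eH n)).comp Phi).hasSum (lp.hasSum_single (by norm_num) g)
  rw [comp_apply, innerSL_apply_apply, inner_eH_left] at h
  refine h.congr_fun fun m => ?_
  have hsingle : lp.single 2 m (g m) = g m • eH m := by
    rw [eH, ← lp.single_smul, smul_eq_mul, mul_one]
  rw [comp_apply, innerSL_apply_apply, hsingle, map_smul, inner_smul_right, inner_eH_Phi_eH,
    mul_comm]

lemma hasSum_neg_one_pow_mul {f : H} (hfN : f ∈ domN) (n : ℕ) :
    HasSum (fun m : ℕ => (-1) ^ m * f m)
      (I * (-1) ^ n * (Phi (Nop f hfN) n - n * Phi f n - I * f n)) := by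
  have h := (((hasSum_Phi_apply (Nop f hfN) n).sub ((hasSum_Phi_apply f n).mul_left (n : ℂ))).sub
    (hasSum_ite_eq n (I * f n))).mul_left (I * (-1) ^ n)
  refine h.congr_fun fun m => ?_
  rw [Nop_apply]
  rcases eq_or_ne m n with rfl | hmn
  · simp only [sub_self, if_true]
    linear_combination (-1) ^ m * f m * I_sq
  · have hk : (n : ℤ) - m ≠ 0 := sub_ne_zero.mpr (by exact_mod_cast hmn.symm)
    have hkC : (((n : ℤ) - m : ℤ) : ℂ) = n - m := by push_cast; ring
    have hsq : ((-1 : ℂ) ^ n) ^ 2 = 1 := by rw [← pow_mul, pow_mul', neg_one_sq, one_pow]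
    rw [if_neg hmn, fourierCoeff_argFun hk, neg_one_zpow_natCast_sub, hkC]
    field_simp [sub_ne_zero.mpr (Nat.cast_injective.ne hmn.symm)]
    linear_combination (-((-1) ^ n) ^ 2 * (-1) ^ m * f m * (m - n)) * I_sq +
      (-1) ^ m * f m * (m - n) * hsq

/-- (Proposition `prop:Heisenberg-main1`.) For every `f` in the maximal domain
`D([Φ,N]) = D(ΦN) ∩ D(NΦ)` of the commutator (`D(ΦN) = D(N)` since `Φ` is bounded), one has
`ΦNf − NΦf = i·f`. -/
theorem heisenberg_on_maximal_domain (f : H) (hfN : f ∈ domN) (hfNPhi : Phi f ∈ domN) :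
    Phi (Nop f hfN) - Nop (Phi f) hfNPhi = Complex.I • f := by
  set v := Phi (Nop f hfN) - Nop (Phi f) hfNPhi - I • f
  have hsum (n : ℕ) : HasSum (fun m : ℕ => (-1) ^ m * f m) (I * (-1) ^ n * v n) :=
    hasSum_neg_one_pow_mul hfN n
  set S := ∑' m : ℕ, (-1) ^ m * f m
  have hvS (n : ℕ) : I * (-1) ^ n * v n = S := (hsum n).tsum_eq.symm
  have hS : S = 0 := norm_eq_zero.mp <| lp.const_eq_zero_of_forall_norm_apply_eq (by norm_num)
    (v := v) fun n => by simp [← hvS n]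
  have hv : v = 0 := lp.ext <| funext fun n => by simpa [hS] using hvS n
  exact sub_eq_zero.mp hv

end GW
end
end

section
/- Let (c_n)_{n∈ℕ} be a sequence of complex numbers satisfying (i) Σ_{n∈ℕ} n²|c_n|² < ∞ and (ii) Σ_{n∈ℕ} n²·|Σ_{m∈ℕ, m≠n} ((−1)^{m−n}/(m−n))·c_m|² < ∞. Then Σ_{n∈ℕ} (−1)^n c_n = 0. -/
/-!
Put `b m = (-1)^m c m` and `H f n = ∑_{m ≠ n} f m / (m - n)`. Hypothesis (ii) says that
`n · H b n` is square summable, so it tends to `0`. Since `m / (m - n) = 1 + n / (m - n)`,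
`H (m b) n = n · H b n + ∑ b - b n`. By (i) the sequence `m b m` is square summable, while the
kernels `1 / (m - n)` are bounded in `ℓ²` uniformly in `n` and tend to `0` pointwise; hence
`H (m b) n → 0`. Letting `n → ∞` in the identity gives `∑ b = 0`.
-/

open Filter Topology

section SquareSummable

variable {ι : Type*} {x y : ι → ℝ}

lemma mul_le_inv_mul_sq_add_mul_sq_div_two {δ : ℝ} (hδ : 0 < δ) (a b : ℝ) :
    a * b ≤ (δ⁻¹ * a ^ 2 + δ * b ^ 2) / 2 := by
  have hsq := mul_nonneg (inv_nonneg.2 hδ.le) (sq_nonneg (a - δ * b))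
  have : δ⁻¹ * δ = 1 := inv_mul_cancel₀ hδ.ne'
  nlinarith

lemma summable_mul_of_summable_sq (hx : Summable (x · ^ 2)) (hy : Summable (y · ^ 2)) :
    Summable fun i => x i * y i :=
  .of_norm_bounded ((hx.add hy).div_const 2) fun i => by
    rw [Real.norm_eq_abs, abs_mul]
    nlinarith [two_mul_le_add_sq |x i| |y i|, sq_abs (x i), sq_abs (y i)]

lemma tsum_mul_le_of_summable_sq {δ : ℝ} (hδ : 0 < δ) (hx : Summable (x · ^ 2))
    (hy : Summable (y · ^ 2)) :
    ∑' i, x i * y i ≤ (δ⁻¹ * ∑' i, x i ^ 2 + δ * ∑' i, y i ^ 2) / 2 := calc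
  _ ≤ ∑' i, (δ⁻¹ * x i ^ 2 + δ * y i ^ 2) / 2 :=
    (summable_mul_of_summable_sq hx hy).tsum_le_tsum
      (fun i => mul_le_inv_mul_sq_add_mul_sq_div_two hδ _ _)
      (((hx.mul_left _).add (hy.mul_left _)).div_const 2)
  _ = _ := by
    rw [tsum_div_const, (hx.mul_left _).tsum_add (hy.mul_left _), tsum_mul_left, tsum_mul_left]

end SquareSummable

lemma tendsto_tsum_mul_atTop_zero {x : ℕ → ℝ} {y : ℕ → ℕ → ℝ} {K : ℝ}
    (hx0 : ∀ m, 0 ≤ x m) (hy0 : ∀ n m, 0 ≤ y n m)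
    (hx : Summable (x · ^ 2)) (hy : ∀ n, Summable (y n · ^ 2))
    (hK : ∀ n, ∑' m, y n m ^ 2 ≤ K) (hlim : ∀ m, Tendsto (y · m) atTop (𝓝 0)) :
    Tendsto (fun n => ∑' m, x m * y n m) atTop (𝓝 0) := by
  have hxy n := summable_mul_of_summable_sq hx (hy n)
  refine tendsto_order.2 ⟨fun a ha => .of_forall fun n =>
    ha.trans_le (tsum_nonneg fun m => mul_nonneg (hx0 m) (hy0 n m)), fun ε hε => ?_⟩
  have hK0 : 0 ≤ K := (tsum_nonneg fun m => sq_nonneg _).trans (hK 0)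
  set δ := ε / (2 * (K + 1)) with hδ
  have hδ0 : 0 < δ := by positivity
  have hδK : δ * K < ε / 2 := by
    rw [hδ, div_mul_eq_mul_div, div_lt_div_iff₀ (by positivity) two_pos]
    nlinarith
  obtain ⟨M, hM⟩ : ∃ M, ∑' m, x (m + M) ^ 2 < δ * (ε / 2) :=
    ((tendsto_sum_nat_add fun m => x m ^ 2).eventually (gt_mem_nhds (by positivity))).exists
  have hhead : Tendsto (fun n => ∑ m ∈ Finset.range M, x m * y n m) atTop (𝓝 0) := by
    simpa using tendsto_finsetSum _ fun m _ => (hlim m).const_mul (x m)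
  filter_upwards [hhead.eventually (gt_mem_nhds (half_pos hε))] with n hn
  have htail : ∑' m, x (m + M) * y n (m + M) < ε / 2 := calc
    _ ≤ (δ⁻¹ * ∑' m, x (m + M) ^ 2 + δ * ∑' m, y n (m + M) ^ 2) / 2 :=
      tsum_mul_le_of_summable_sq hδ0 ((summable_nat_add_iff M).2 hx)
        ((summable_nat_add_iff M).2 (hy n))
    _ ≤ (δ⁻¹ * ∑' m, x (m + M) ^ 2 + δ * K) / 2 := by
      gcongr
      exact (tsum_comp_le_tsum_of_inj (hy n) (fun m => sq_nonneg _)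
        (add_left_injective M)).trans (hK n)
    _ < (ε / 2 + ε / 2) / 2 := by
      gcongr
      rwa [inv_mul_lt_iff₀ hδ0]
    _ = ε / 2 := by ring
  rw [← (hxy n).sum_add_tsum_nat_add M]
  linarith

lemma summable_norm_of_summable_natCast_sq_mul_norm_sq {E : Type*} [SeminormedAddCommGroup E]
    {c : ℕ → E} (h : Summable fun n : ℕ => (n : ℝ) ^ 2 * ‖c n‖ ^ 2) :
    Summable fun n => ‖c n‖ :=
  (summable_mul_of_summable_sq (x := fun n : ℕ => n * ‖c n‖) (y := fun n : ℕ => (n : ℝ)⁻¹)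
    (by simpa only [mul_pow] using h)
    (by simpa only [inv_pow] using Real.summable_nat_pow_inv.2 one_lt_two)).congr_cofinite
    ((eventually_cofinite_ne 0).mono fun n hn => by field_simp)

lemma tendsto_atTop_zero_of_summable_norm_sq {E : Type*} [SeminormedAddCommGroup E]
    {u : ℕ → E} (h : Summable (‖u ·‖ ^ 2)) : Tendsto u atTop (𝓝 0) := by
  rw [tendsto_zero_iff_norm_tendsto_zero]
  simpa [Real.sqrt_sq (norm_nonneg _)] using h.tendsto_atTop_zero.sqrt

lemma inv_natCast_sub_natCast_eq_inv_intCast (m n : ℕ) :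
    ((m : ℂ) - n)⁻¹ = (((m - n : ℤ) : ℂ))⁻¹ := by
  push_cast; rfl

lemma norm_inv_intCast_le_one (k : ℤ) : ‖(k : ℂ)⁻¹‖ ≤ 1 := by
  rw [norm_inv, Complex.norm_intCast]
  rcases eq_or_ne k 0 with rfl | hk
  · simp
  · exact inv_le_one_of_one_le₀ (by exact_mod_cast Int.one_le_abs hk)

lemma summable_norm_inv_intCast_sq : Summable fun k : ℤ => ‖(k : ℂ)⁻¹‖ ^ 2 :=
  (Real.summable_one_div_int_pow.2 one_lt_two).congr fun k => by
    rw [norm_inv, Complex.norm_intCast, inv_pow, sq_abs, one_div]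

lemma summable_norm_inv_natCast_sub_sq (n : ℕ) :
    Summable fun m : ℕ => ‖((m : ℂ) - n)⁻¹‖ ^ 2 := by
  simpa only [inv_natCast_sub_natCast_eq_inv_intCast, Function.comp_def] using
    summable_norm_inv_intCast_sq.comp_injective fun a b h => by simpa using h

lemma tsum_norm_inv_natCast_sub_sq_le (n : ℕ) :
    ∑' m : ℕ, ‖((m : ℂ) - n)⁻¹‖ ^ 2 ≤ ∑' k : ℤ, ‖(k : ℂ)⁻¹‖ ^ 2 := by
  simpa only [inv_natCast_sub_natCast_eq_inv_intCast, Function.comp_def] using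
    tsum_comp_le_tsum_of_inj summable_norm_inv_intCast_sq (fun _ => sq_nonneg _)
      (i := fun m : ℕ => (m - n : ℤ)) fun a b h => by simpa using h

lemma tendsto_norm_inv_natCast_sub (m : ℕ) :
    Tendsto (fun n : ℕ => ‖((m : ℂ) - n)⁻¹‖) atTop (𝓝 0) := by
  simpa using (tendsto_inv₀_cobounded.comp <| (tendsto_const_sub_cobounded (m : ℂ)).comp
    tendsto_natCast_atTop_cobounded).norm

lemma summable_div_natCast_sub {f : ℕ → ℂ} (hf : Summable (‖f ·‖)) (n : ℕ) :
    Summable fun m : ℕ => f m / ((m : ℂ) - n) :=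
  .of_norm_bounded hf fun m => by
    rw [div_eq_mul_inv, norm_mul]
    exact mul_le_of_le_one_right (norm_nonneg _)
      (inv_natCast_sub_natCast_eq_inv_intCast m n ▸ norm_inv_intCast_le_one _)

/-- The term `m = n` vanishes because division by zero is zero, so this is
`∑_{m ≠ n} f m / (m - n)`. -/
noncomputable def discreteHilbertTransform (f : ℕ → ℂ) (n : ℕ) : ℂ :=
  ∑' m : ℕ, f m / ((m : ℂ) - n)

lemma tendsto_discreteHilbertTransform_atTop {a : ℕ → ℂ} (ha : Summable (‖a ·‖ ^ 2)) :
    Tendsto (discreteHilbertTransform a) atTop (𝓝 0) := by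
  refine squeeze_zero_norm (fun n => ?_) <| tendsto_tsum_mul_atTop_zero
    (fun _ => norm_nonneg _) (fun _ _ => norm_nonneg _) ha summable_norm_inv_natCast_sub_sq
    tsum_norm_inv_natCast_sub_sq_le tendsto_norm_inv_natCast_sub
  simp only [discreteHilbertTransform, div_eq_mul_inv]
  refine (norm_tsum_le_tsum_norm ?_).trans_eq (by simp_rw [norm_mul])
  simpa only [norm_mul] using summable_mul_of_summable_sq ha (summable_norm_inv_natCast_sub_sq n)

lemma discreteHilbertTransform_natCast_mul {b : ℕ → ℂ} (hb : Summable (‖b ·‖)) (n : ℕ) :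
    discreteHilbertTransform (fun m => m * b m) n =
      n * discreteHilbertTransform b n + (∑' m, b m - b n) := by
  have key (m : ℕ) : (m : ℂ) * b m / (m - n) =
      n * (b m / (m - n)) + (b m - if m = n then b n else 0) := by
    rcases eq_or_ne m n with rfl | h
    · simp
    · have : (m : ℂ) - n ≠ 0 := sub_ne_zero.2 (by exact_mod_cast h)
      rw [if_neg h]
      field_simp
      ring
  have hsingle := hasSum_ite_eq n (b n)
  simp only [discreteHilbertTransform, key]
  rw [Summable.tsum_add ((summable_div_natCast_sub hb n).mul_left _)
    (hb.of_norm.sub hsingle.summable), tsum_mul_left, hb.of_norm.tsum_sub hsingle.summable,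
    hsingle.tsum_eq]

lemma tsum_ne_neg_one_zpow_div_mul_eq (c : ℕ → ℂ) (n : ℕ) :
    ∑' m : {m : ℕ // m ≠ n}, ((-1 : ℂ) ^ (((m : ℕ) : ℤ) - (n : ℤ)) / (((m : ℕ) : ℂ) - n)) * c m =
      (-1) ^ n * discreteHilbertTransform (fun m => (-1) ^ m * c m) n := by
  refine (tsum_subtype_eq_of_support_subset (s := {m | m ≠ n})
    (f := fun m : ℕ => (-1 : ℂ) ^ ((m : ℤ) - n) / ((m : ℂ) - n) * c m) ?_).trans ?_
  · intro m hm h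
    simp [h] at hm
  · simp only [discreteHilbertTransform, ← tsum_mul_left]
    refine tsum_congr fun m => ?_
    rw [zpow_sub₀ (by norm_num), zpow_natCast, zpow_natCast, div_eq_mul_inv ((-1 : ℂ) ^ m),
      ← inv_pow, inv_neg, inv_one]
    ring

/-- (Cancellation result.) Let `(c_n)` be a sequence of complex numbers with
(i) `Σ_n n²|c_n|² < ∞` and
(ii) `Σ_n n²·|Σ_{m ≠ n} ((−1)^{m−n}/(m−n))·c_m|² < ∞`.
Then `Σ_n (−1)^n c_n = 0`. -/
theorem alternating_sum_eq_zero_of_summable (c : ℕ → ℂ)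
    (h1 : Summable fun n : ℕ => (n : ℝ) ^ 2 * ‖c n‖ ^ 2)
    (h2 : Summable fun n : ℕ =>
      (n : ℝ) ^ 2 *
        ‖∑' m : {m : ℕ // m ≠ n},
            ((-1 : ℂ) ^ (((m : ℕ) : ℤ) - (n : ℤ)) / (((m : ℕ) : ℂ) - (n : ℂ))) * c m‖ ^ 2) :
    ∑' n : ℕ, (-1 : ℂ) ^ n * c n = 0 := by
  set b : ℕ → ℂ := fun m => (-1) ^ m * c m
  have hnorm (m : ℕ) : ‖b m‖ = ‖c m‖ := by simp [b]
  have hb : Summable (‖b ·‖) := by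
    simpa only [hnorm] using summable_norm_of_summable_natCast_sq_mul_norm_sq h1
  have hHb : Tendsto (fun n : ℕ => (n : ℂ) * discreteHilbertTransform b n) atTop (𝓝 0) :=
    tendsto_atTop_zero_of_summable_norm_sq <| h2.congr fun n => by
      rw [tsum_ne_neg_one_zpow_div_mul_eq, norm_mul, norm_mul, norm_pow, norm_neg, norm_one,
        one_pow, one_mul, Complex.norm_natCast, mul_pow]
  have hHmb : Tendsto (discreteHilbertTransform fun m => m * b m) atTop (𝓝 0) :=
    tendsto_discreteHilbertTransform_atTop <| h1.congr fun m => by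
      rw [norm_mul, Complex.norm_natCast, hnorm, mul_pow]
  have hlim : Tendsto (fun n : ℕ => discreteHilbertTransform (fun m => m * b m) n -
      n * discreteHilbertTransform b n + b n) atTop (𝓝 0) := by
    simpa using (hHmb.sub hHb).add hb.of_norm.tendsto_atTop_zero
  simp only [discreteHilbertTransform_natCast_mul hb, add_sub_cancel_left, sub_add_cancel] at hlim
  exact tendsto_nhds_unique tendsto_const_nhds hlim
end
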